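/- Let G be the clique star 𝕂_{u,n_2,...,n_{k+1}} on n vertices as above. Then the distance Laplacian spectrum of G is {0, n, 2n−1 with multiplicity k−1, and 2n−n_i with multiplicity n_i−2 for each i = 2,...,k+1}. -/

import Mathlib

/-!
Write `𝟙` for the all-ones vector, `e_u` for the unit vector at the centre and `1_i` for the
indicator of the non-central vertices of clique `i`, of size `n_i = c i`. Reading off
transmissions and distances gives `𝓛 𝟙 = 0`, `𝓛 e_u = N e_u - 𝟙`,
`𝓛 1_i = (2N - 1) 1_i + (n_i - 1) (e_u - 2 𝟙)`, and `𝓛 e_v = (2N - n_i) e_v + e_u + 1_i - 2 𝟙`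
for every non-central vertex `v` of clique `i`. Fix a clique `i₀`. In the basis `𝟙`, `e_u`,
`1_i` (`i ≠ i₀`), `e_v` (`v` not the first vertex of its clique), graded in this order, `𝓛` is
therefore block triangular and each diagonal block is itself diagonal, so the characteristic
polynomial is the product of `X - λ` over the diagonal entries: `0`, `N`, `2N - 1` (`k - 1`
times) and `2N - n_i` (`n_i - 2` times).
-/

open Matrix BigOperators Polynomial
open scoped Classical

/-- The distance matrix of the clique star `𝕂_{u,n_2,…,n_{k+1}}` (cliques of sizes
`c i` sharing exactly the center vertex `none`): distance `1` to the center and within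
a clique, distance `2` between different cliques. -/
noncomputable def dMatCS {k : ℕ} (c : Fin k → ℕ) :
    Matrix (Option (Σ i : Fin k, Fin (c i - 1))) (Option (Σ i : Fin k, Fin (c i - 1))) ℝ :=
  fun x y =>
    if x = y then 0
    else match x, y with
      | none, _ => 1
      | _, none => 1
      | some a, some b => if a.1 = b.1 then 1 else 2

/-- The distance Laplacian `𝓛 = Tr - 𝓓` of the clique star, where `Tr` is the
diagonal matrix of transmissions (row sums of `𝓓`). -/
noncomputable def dLapCS {k : ℕ} (c : Fin k → ℕ) :
    Matrix (Option (Σ i : Fin k, Fin (c i - 1))) (Option (Σ i : Fin k, Fin (c i - 1))) ℝ :=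
  Matrix.diagonal (fun x => ∑ y, dMatCS c x y) - dMatCS c

theorem Fintype.prod_ite_eq_mul_pow {ι M : Type*} [Fintype ι] [DecidableEq ι] [CommMonoid M]
    (p : ι) (a b : M) :
    ∏ i, (if i = p then a else b) = a * b ^ (Fintype.card ι - 1) := by
  rw [Fintype.prod_eq_mul_prod_compl p, if_pos rfl,
    Finset.prod_congr rfl fun i hi => if_neg (by simpa using hi), Finset.prod_const,
    Finset.card_compl, Finset.card_singleton]

theorem Matrix.BlockTriangular.charpoly_of_isDiag {n α R : Type*} [Fintype n] [DecidableEq n]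
    [CommRing R] [LinearOrder α] {M : Matrix n n R} {b : n → α} (hM : M.BlockTriangular b)
    (hdiag : ∀ a, (M.toSquareBlock b a).IsDiag) :
    M.charpoly = ∏ i, (X - C (M i i)) := by
  rw [hM.charpoly, ← Finset.prod_fiberwise_of_maps_to (g := b)
    (fun i _ => Finset.mem_image_of_mem b (Finset.mem_univ i))]
  refine Finset.prod_congr rfl fun a _ => ?_
  rw [← (hdiag a).diagonal_diag, charpoly_diagonal]
  exact (Finset.prod_subtype _ (fun i => by simp) (fun i => X - C (M i i))).symm

theorem LinearMap.charpoly_eq_prod_of_sub_smul_mem_span {ι R M α : Type*} [Fintype ι]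
    [DecidableEq ι] [CommRing R] [AddCommGroup M] [Module R M] [Module.Free R M]
    [Module.Finite R M] [LinearOrder α] (f : M →ₗ[R] M) (b : Module.Basis ι R M)
    (lev : ι → α) (μ : ι → R)
    (h : ∀ i, f (b i) - μ i • b i ∈ Submodule.span R (b '' {j | lev j < lev i})) :
    f.charpoly = ∏ i, (X - C (μ i)) := by
  have hentry : ∀ i j, ¬ lev i < lev j →
      LinearMap.toMatrix b b f i j = if i = j then μ j else 0 := by
    intro i j hij
    have hzero : b.repr (f (b j) - μ j • b j) i = 0 :=
      Finsupp.notMem_support_iff.mp fun hi => hij (b.mem_span_image.mp (h j) hi)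
    rw [map_sub, map_smul, b.repr_self, Finsupp.sub_apply, Finsupp.smul_apply,
      Finsupp.single_apply, sub_eq_zero] at hzero
    rw [LinearMap.toMatrix_apply, hzero]
    by_cases hji : j = i
    · simp [hji]
    · simp [hji, Ne.symm hji]
  have hM : (LinearMap.toMatrix b b f).BlockTriangular lev := fun i j hlt => by
    rw [hentry i j (lt_asymm hlt), if_neg (ne_of_apply_ne lev hlt.ne')]
  rw [← LinearMap.charpoly_toMatrix f b, hM.charpoly_of_isDiag]
  · refine Finset.prod_congr rfl fun i _ => ?_
    rw [hentry i i (lt_irrefl _), if_pos rfl]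
  · intro a x y hxy
    rw [toSquareBlock_def, of_apply, hentry x y (by rw [x.2, y.2]; exact lt_irrefl a),
      if_neg (Subtype.coe_ne_coe.mpr hxy)]

theorem Matrix.IsSymm.laplacian_mulVec_single_one {n R : Type*} [Fintype n] [DecidableEq n]
    [CommRing R] {A : Matrix n n R} (hA : A.IsSymm) (x : n) :
    (diagonal (fun i => ∑ j, A i j) - A) *ᵥ Pi.single x 1
      = (∑ j, A x j) • Pi.single x 1 - A x := by
  ext z
  by_cases hzx : z = x
  · subst hzx; simp
  · simp [hzx, hA.apply z x]

theorem Matrix.laplacian_mulVec_one {n R : Type*} [Fintype n] [DecidableEq n] [CommRing R]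
    (A : Matrix n n R) : (diagonal (fun i => ∑ j, A i j) - A) *ᵥ 1 = 0 := by
  rw [sub_mulVec, sub_eq_zero]
  ext i
  simp [mulVec, dotProduct, diagonal_apply]

namespace CliqueStar

variable {k : ℕ} (c : Fin k → ℕ)

abbrev Vertex := Option (Σ i : Fin k, Fin (c i - 1))

noncomputable abbrev numVertices : ℝ := Fintype.card (Vertex c)

noncomputable def cliqueInd (i : Fin k) : Vertex c → ℝ
  | none => 0
  | some v => if v.1 = i then 1 else 0

theorem cliqueInd_eq_sum_single (i : Fin k) :
    cliqueInd c i = ∑ t : Fin (c i - 1), Pi.single (some ⟨i, t⟩) 1 := by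
  ext (_ | ⟨j, s⟩)
  · simp [cliqueInd]
  · by_cases hji : j = i
    · subst hji; simp [cliqueInd, Pi.single_apply]
    · simp [cliqueInd, hji]

theorem sum_cliqueInd (i : Fin k) : ∑ x, cliqueInd c i x = ((c i - 1 : ℕ) : ℝ) := by
  simp only [cliqueInd_eq_sum_single, Finset.sum_apply]
  rw [Finset.sum_comm]
  simp

theorem one_eq_single_none_add_sum_cliqueInd :
    (1 : Vertex c → ℝ) = Pi.single none 1 + ∑ i, cliqueInd c i := by
  ext (_ | ⟨j, s⟩)
  · simp [cliqueInd]
  · simp [cliqueInd, Finset.sum_apply]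

theorem isSymm_dMatCS : (dMatCS c).IsSymm := by
  refine Matrix.IsSymm.ext fun x y => ?_
  rcases x with _ | x <;> rcases y with _ | y <;> simp [dMatCS, eq_comm]

theorem dMatCS_none : dMatCS c none = 1 - Pi.single none 1 := by
  ext (_ | y) <;> simp [dMatCS]

theorem dMatCS_some (v : Σ i : Fin k, Fin (c i - 1)) :
    dMatCS c (some v) = 2 - Pi.single (some v) 1 - Pi.single none 1 - cliqueInd c v.1 := by
  ext (_ | w)
  · simp [dMatCS, cliqueInd]; norm_num
  · by_cases hwv : w = v
    · subst hwv; simp [dMatCS, cliqueInd]; norm_num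
    by_cases hw : w.1 = v.1
    · simp [dMatCS, cliqueInd, hwv, Ne.symm hwv, hw]; norm_num
    · simp [dMatCS, cliqueInd, hwv, Ne.symm hwv, hw, Ne.symm hw]

theorem sum_dMatCS_none : ∑ y, dMatCS c none y = numVertices c - 1 := by
  simp [numVertices, dMatCS_none, Finset.sum_sub_distrib]

theorem sum_dMatCS_some (v : Σ i : Fin k, Fin (c i - 1)) :
    ∑ y, dMatCS c (some v) y = 2 * numVertices c - 2 - ((c v.1 - 1 : ℕ) : ℝ) := by
  simp only [dMatCS_some, Pi.sub_apply, Finset.sum_sub_distrib, sum_cliqueInd]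
  simp [numVertices]
  ring

theorem dLapCS_mulVec_one : dLapCS c *ᵥ 1 = 0 :=
  Matrix.laplacian_mulVec_one _

theorem dLapCS_mulVec_single_none :
    dLapCS c *ᵥ Pi.single none 1 = numVertices c • Pi.single none 1 - 1 := by
  rw [dLapCS, (isSymm_dMatCS c).laplacian_mulVec_single_one, sum_dMatCS_none,
    dMatCS_none]
  module

theorem dLapCS_mulVec_single_some (v : Σ i : Fin k, Fin (c i - 1)) :
    dLapCS c *ᵥ Pi.single (some v) 1
      = (2 * numVertices c - 1 - ((c v.1 - 1 : ℕ) : ℝ)) • Pi.single (some v) 1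
        + Pi.single none 1 + cliqueInd c v.1 - 2 := by
  rw [dLapCS, (isSymm_dMatCS c).laplacian_mulVec_single_one, sum_dMatCS_some,
    dMatCS_some]
  module

theorem dLapCS_mulVec_cliqueInd (i : Fin k) :
    dLapCS c *ᵥ cliqueInd c i
      = (2 * numVertices c - 1 : ℝ) • cliqueInd c i
        + ((c i - 1 : ℕ) : ℝ) • (Pi.single none 1 - 2) := by
  conv_lhs => rw [cliqueInd_eq_sum_single, Matrix.mulVec_sum]
  simp only [dLapCS_mulVec_single_some, Finset.sum_sub_distrib, Finset.sum_add_distrib,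
    ← Finset.smul_sum, Finset.sum_const, Finset.card_univ, Fintype.card_fin,
    ← cliqueInd_eq_sum_single]
  module

variable (i0 : Fin k)

/-- The basis `𝟙, e_u, 1_i (i ≠ i0), e_v` indexed by vertices: the first vertex of clique `i`
carries `1_i`, or `e_u` when `i = i0`. -/
noncomputable def triangularFamily : Vertex c → Vertex c → ℝ
  | none => 1
  | some ⟨i, t⟩ =>
      if (t : ℕ) = 0 then (if i = i0 then Pi.single none 1 else cliqueInd c i)
      else Pi.single (some ⟨i, t⟩) 1

def level : Vertex c → ℕ
  | none => 0
  | some ⟨i, t⟩ => if (t : ℕ) = 0 then (if i = i0 then 1 else 2) else 3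

noncomputable def diagEntry : Vertex c → ℝ
  | none => 0
  | some ⟨i, t⟩ =>
      if (t : ℕ) = 0 then
        (if i = i0 then numVertices c else 2 * numVertices c - 1)
      else 2 * numVertices c - 1 - ((c i - 1 : ℕ) : ℝ)

noncomputable abbrev lowerSpan (n : ℕ) : Submodule ℝ (Vertex c → ℝ) :=
  Submodule.span ℝ (triangularFamily c i0 '' {y | level c i0 y < n})

theorem triangularFamily_mem_span {x : Vertex c} {n : ℕ} (hx : level c i0 x < n) :
    triangularFamily c i0 x ∈ lowerSpan c i0 n :=
  Submodule.subset_span ⟨x, hx, rfl⟩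

theorem one_mem_span {n : ℕ} (hn : 1 ≤ n) :
    (1 : Vertex c → ℝ) ∈ lowerSpan c i0 n :=
  triangularFamily_mem_span c i0 (x := none) (by simp [level]; omega)

theorem two_mem_span {n : ℕ} (hn : 1 ≤ n) :
    (2 : Vertex c → ℝ) ∈ lowerSpan c i0 n := by
  rw [← one_add_one_eq_two]
  exact Submodule.add_mem _ (one_mem_span c i0 hn) (one_mem_span c i0 hn)

theorem single_none_mem_span (hc : ∀ i, 2 ≤ c i) {n : ℕ} (hn : 2 ≤ n) :
    Pi.single none 1 ∈ lowerSpan c i0 n := by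
  have h := triangularFamily_mem_span c i0 (n := n)
    (x := some ⟨i0, ⟨0, by have := hc i0; omega⟩⟩) (by simp [level]; omega)
  simpa [triangularFamily] using h

theorem cliqueInd_mem_span (hc : ∀ i, 2 ≤ c i) (i : Fin k) :
    cliqueInd c i ∈ lowerSpan c i0 3 := by
  have hother : ∀ j, j ≠ i0 →
      cliqueInd c j ∈ lowerSpan c i0 3 := by
    intro j hj
    have h := triangularFamily_mem_span c i0 (n := 3)
      (x := some ⟨j, ⟨0, by have := hc j; omega⟩⟩) (by simp [level, hj])
    simpa [triangularFamily, hj] using h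
  by_cases hi : i = i0
  · subst hi
    have hsplit : cliqueInd c i
        = 1 - Pi.single none 1 - ∑ j ∈ Finset.univ.erase i, cliqueInd c j := by
      rw [one_eq_single_none_add_sum_cliqueInd, ← Finset.add_sum_erase _ _ (Finset.mem_univ i)]
      abel
    rw [hsplit]
    refine Submodule.sub_mem _ (Submodule.sub_mem _ (one_mem_span c i (by norm_num))
      (single_none_mem_span c i hc (by norm_num))) (Submodule.sum_mem _ fun j hj => ?_)
    exact hother j (Finset.ne_of_mem_erase hj)
  · exact hother i hi

theorem top_le_span_range_triangularFamily (hc : ∀ i, 2 ≤ c i) :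
    ⊤ ≤ Submodule.span ℝ (Set.range (triangularFamily c i0)) := by
  set S := Submodule.span ℝ (Set.range (triangularFamily c i0))
  have hW : ∀ n, lowerSpan c i0 n ≤ S :=
    fun n => Submodule.span_mono (Set.image_subset_range _ _)
  have hsome : ∀ (i : Fin k) (t : Fin (c i - 1)), (t : ℕ) ≠ 0 →
      Pi.single (some ⟨i, t⟩) 1 ∈ S :=
    fun i t ht => Submodule.subset_span ⟨some ⟨i, t⟩, by simp [triangularFamily, ht]⟩
  rw [← (Pi.basisFun ℝ (Vertex c)).span_eq, Submodule.span_le]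
  rintro _ ⟨x, rfl⟩
  rw [Pi.basisFun_apply]
  rcases x with _ | ⟨i, t⟩
  · exact hW 2 (single_none_mem_span c i0 hc le_rfl)
  by_cases ht : (t : ℕ) = 0
  · have hsplit : Pi.single (some ⟨i, t⟩) 1
        = cliqueInd c i - ∑ s ∈ Finset.univ.erase t, Pi.single (some ⟨i, s⟩) 1 := by
      rw [cliqueInd_eq_sum_single, ← Finset.add_sum_erase _ _ (Finset.mem_univ t)]
      abel
    rw [hsplit]
    refine Submodule.sub_mem _ (hW 3 (cliqueInd_mem_span c i0 hc i))
      (Submodule.sum_mem _ fun s hs => hsome i s ?_)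
    exact fun hs0 => Finset.ne_of_mem_erase hs (Fin.ext (hs0.trans ht.symm))
  · exact hsome i t ht

noncomputable def triangularBasis (hc : ∀ i, 2 ≤ c i) :
    Module.Basis (Vertex c) ℝ (Vertex c → ℝ) :=
  basisOfTopLeSpanOfCardEqFinrank (triangularFamily c i0)
    (top_le_span_range_triangularFamily c i0 hc) (Module.finrank_fintype_fun_eq_card ℝ).symm

theorem dLapCS_mulVec_triangularFamily_sub_mem (hc : ∀ i, 2 ≤ c i) (x : Vertex c) :
    dLapCS c *ᵥ triangularFamily c i0 x - diagEntry c i0 x • triangularFamily c i0 x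
      ∈ lowerSpan c i0 (level c i0 x) := by
  rcases x with _ | ⟨i, t⟩
  · simp [triangularFamily, diagEntry, dLapCS_mulVec_one]
  by_cases ht : (t : ℕ) = 0
  · by_cases hi : i = i0
    · have hx : level c i0 (some ⟨i, t⟩) = 1 := by simp [level, ht, hi]
      rw [hx]
      simp only [triangularFamily, diagEntry, ht, hi, if_true, dLapCS_mulVec_single_none,
        sub_sub_cancel_left]
      exact Submodule.neg_mem _ (one_mem_span c i0 le_rfl)
    · have hx : level c i0 (some ⟨i, t⟩) = 2 := by simp [level, ht, hi]
      rw [hx]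
      simp only [triangularFamily, diagEntry, ht, hi, if_true, if_false, dLapCS_mulVec_cliqueInd,
        add_sub_cancel_left]
      exact Submodule.smul_mem _ _ (Submodule.sub_mem _ (single_none_mem_span c i0 hc le_rfl)
        (two_mem_span c i0 (by norm_num)))
  · have hx : level c i0 (some ⟨i, t⟩) = 3 := by simp [level, ht]
    rw [hx]
    simp only [triangularFamily, diagEntry, ht, if_false, dLapCS_mulVec_single_some]
    rw [show ∀ a b d e : Vertex c → ℝ, a + b + d - e - a = b + d - e by intros; abel]
    exact Submodule.sub_mem _ (Submodule.add_mem _ (single_none_mem_span c i0 hc (by norm_num))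
      (cliqueInd_mem_span c i0 hc i)) (two_mem_span c i0 (by norm_num))

theorem charpoly_dLapCS_eq_prod_diagEntry (hc : ∀ i, 2 ≤ c i) :
    (dLapCS c).charpoly = ∏ x, (X - C (diagEntry c i0 x)) := by
  rw [← Matrix.charpoly_toLin']
  refine LinearMap.charpoly_eq_prod_of_sub_smul_mem_span _ (triangularBasis c i0 hc) (level c i0) _
    fun x => ?_
  rw [triangularBasis, coe_basisOfTopLeSpanOfCardEqFinrank, Matrix.toLin'_apply]
  exact dLapCS_mulVec_triangularFamily_sub_mem c i0 hc x

theorem prod_X_sub_C_diagEntry (hc : ∀ i, 2 ≤ c i) :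
    ∏ x, (X - C (diagEntry c i0 x))
      = X * (X - C (numVertices c)) * (X - C (2 * numVertices c - 1)) ^ (k - 1)
        * ∏ i : Fin k, (X - C (2 * numVertices c - (c i : ℝ))) ^ (c i - 2) := by
  have hclique : ∀ i, ∏ t : Fin (c i - 1), (X - C (diagEntry c i0 (some ⟨i, t⟩)))
      = (if i = i0 then X - C (numVertices c) else X - C (2 * numVertices c - 1))
        * (X - C (2 * numVertices c - (c i : ℝ))) ^ (c i - 2) := by
    intro i
    have hci := hc i
    have hm : ((c i - 1 : ℕ) : ℝ) = c i - 1 := by rw [Nat.cast_sub (by omega), Nat.cast_one]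
    have hfirst : ∀ t : Fin (c i - 1), X - C (diagEntry c i0 (some ⟨i, t⟩))
        = if t = ⟨0, by omega⟩ then
            (if i = i0 then X - C (numVertices c) else X - C (2 * numVertices c - 1))
          else X - C (2 * numVertices c - (c i : ℝ)) := by
      intro t
      simp only [diagEntry, Fin.ext_iff, hm]
      split_ifs <;> ring_nf
    rw [Finset.prod_congr rfl fun t _ => hfirst t, Fintype.prod_ite_eq_mul_pow, Fintype.card_fin]
    rfl
  rw [Fintype.prod_option, Fintype.prod_sigma, Finset.prod_congr rfl fun i _ => hclique i,
    Finset.prod_mul_distrib, Fintype.prod_ite_eq_mul_pow, Fintype.card_fin]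
  simp only [diagEntry, map_zero, sub_zero]
  ring

end CliqueStar

open CliqueStar in
/-- The distance Laplacian spectrum of the clique star
`𝕂_{u,n_2,…,n_{k+1}}` with clique sizes `c i ≥ 2` and `N = 1 + ∑ (c i - 1)` vertices is
`{0, N, (2N-1)^{[k-1]}, (2N - c i)^{[c i - 2]}}`, via the characteristic polynomial. -/
theorem distLap_spectrum_cliqueStar {k : ℕ} (hk : 1 ≤ k)
    (c : Fin k → ℕ) (hc : ∀ i, 2 ≤ c i) (N : ℕ) (hN : N = 1 + ∑ i, (c i - 1)) :
    (dLapCS c).charpoly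
      = X * (X - C (N : ℝ)) * (X - C (2 * (N : ℝ) - 1)) ^ (k - 1)
        * ∏ i : Fin k, (X - C (2 * (N : ℝ) - (c i : ℝ))) ^ (c i - 2) := by
  have hcard : (N : ℝ) = numVertices c := by simp [numVertices, hN, add_comm]
  rw [charpoly_dLapCS_eq_prod_diagEntry c ⟨0, hk⟩ hc, prod_X_sub_C_diagEntry c ⟨0, hk⟩ hc,
    hcard]
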